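/- For every τ in the upper half-plane ℍ, with q := e^{2πiτ} and Q(r,s) := r(r−1)/2 + s(s+1)/2 + 5s + 6r + 5rs, the following theta-function identity holds: ∑_{r=0}^{3} ∑_{s=0}^{3} (−1)^r q^{Q(r,s)} · ϑ(4(s−r)τ; 16τ) ϑ((24(r+s)+44)τ; 96τ) / [ϑ(1/2+(24r+22)τ; 96τ) ϑ(1/2+(24s+22)τ; 96τ)] = 2 [ q⁶ ϑ(4τ;16τ)ϑ(68τ;96τ) / (ϑ(1/2+46τ;96τ)ϑ(1/2+22τ;96τ)) − q^{−47} ϑ(12τ;16τ)ϑ(20τ;96τ) / (ϑ(1/2+94τ;96τ)ϑ(1/2+22τ;96τ)) + q^{−39} ϑ(4τ;16τ)ϑ(20τ;96τ) / (ϑ(1/2+46τ;96τ)ϑ(1/2+70τ;96τ)) − q^{−52} ϑ(4τ;16τ)ϑ(68τ;96τ) / (ϑ(1/2+94τ;96τ)ϑ(1/2+70τ;96τ)) ]. -/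

import Mathlib

open Real Complex

/-- The Jacobi theta function
`ϑ(z;τ) = ∑_{m ∈ 1/2+ℤ} (-1)^m q^{m²/2} e^{2πimz}` with `(-1)^m := e^{πim}`. -/
noncomputable def jtheta (z τ : ℂ) : ℂ :=
  ∑' n : ℤ, Complex.exp ((π : ℂ) * Complex.I * ((n : ℂ) + 1 / 2)) *
    Complex.exp ((π : ℂ) * Complex.I * τ * ((n : ℂ) + 1 / 2) ^ 2) *
    Complex.exp (2 * (π : ℂ) * Complex.I * ((n : ℂ) + 1 / 2) * z)

/-- `Q(r,s) = r(r-1)/2 + s(s+1)/2 + 5s + 6r + 5rs`. -/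
def Qrs (r s : ℕ) : ℕ := r * (r - 1) / 2 + s * (s + 1) / 2 + 5 * s + 6 * r + 5 * r * s

/-!
`Q(r, s)` is symmetric in `r, s` and `ϑ(4(s - r)τ; 16τ)` is odd under `r ↔ s`, while the rest of
the summand is symmetric. Hence the diagonal terms vanish, the terms `(r, s)` and `(s, r)` cancel
when `r ≡ s (mod 2)` and double otherwise. The four surviving pairs `(0,1), (0,3), (1,2), (2,3)`
give the four terms on the right, once the quasi-periodicity
`ϑ(z + τ'; τ') = -e^{-πiτ' - 2πiz} ϑ(z; τ')` folds `ϑ(116τ; 96τ)` and `ϑ(164τ; 96τ)` back to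
`ϑ(20τ; 96τ)` and `ϑ(68τ; 96τ)`.
-/

theorem jtheta_eq_tsum_exp (z τ : ℂ) :
    jtheta z τ = ∑' n : ℤ, cexp (π * I * (n + 1 / 2) + π * I * τ * (n + 1 / 2) ^ 2 +
      2 * π * I * (n + 1 / 2) * z) := by
  simp only [jtheta, Complex.exp_add]

theorem exp_eq_neg_exp_of_sub_eq {x y : ℂ} (k : ℤ) (h : x - y = (2 * k + 1) * π * I) :
    cexp x = -cexp y := by
  rw [← sub_add_cancel x y, h, add_comm, Complex.exp_add,
    show (2 * k + 1) * π * I = k * (2 * π * I) + π * I by ring, exp_add_pi_mul_I,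
    exp_int_mul_two_pi_mul_I, mul_neg_one]

theorem jtheta_neg_left (z τ : ℂ) : jtheta (-z) τ = -jtheta z τ := by
  rw [jtheta_eq_tsum_exp, jtheta_eq_tsum_exp, ← tsum_neg, ← (Equiv.subLeft (-1 : ℤ)).tsum_eq]
  refine tsum_congr fun n => exp_eq_neg_exp_of_sub_eq (-n - 1) ?_
  push_cast [Equiv.subLeft_apply]
  ring

theorem jtheta_zero_left (τ : ℂ) : jtheta 0 τ = 0 := by
  simpa [CharZero.eq_neg_self_iff] using jtheta_neg_left 0 τ

theorem jtheta_add_left (z τ : ℂ) :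
    jtheta (z + τ) τ = -cexp (-(π * I * τ) - 2 * π * I * z) * jtheta z τ := by
  rw [jtheta_eq_tsum_exp, jtheta_eq_tsum_exp, ← (Equiv.subRight (1 : ℤ)).tsum_eq,
    ← tsum_mul_left]
  refine tsum_congr fun n => ?_
  rw [neg_mul, ← Complex.exp_add]
  refine exp_eq_neg_exp_of_sub_eq (-1) ?_
  push_cast [Equiv.subRight_apply]
  ring

theorem jtheta_mul_add_left (τ : ℂ) (a N : ℕ) :
    jtheta ((a + 2 * N) * τ) (2 * N * τ) =
      -(cexp (2 * π * I * τ) ^ (N + a))⁻¹ * jtheta (a * τ) (2 * N * τ) := by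
  rw [add_mul, jtheta_add_left, ← Complex.exp_nat_mul, ← Complex.exp_neg]
  congr 3
  push_cast
  ring

theorem sbar_identity_general (τ : ℂ) :
    (∑ r ∈ Finset.range 4, ∑ s ∈ Finset.range 4,
      (-1 : ℂ) ^ r * Complex.exp (2 * (π : ℂ) * Complex.I * τ) ^ (Qrs r s) *
        jtheta (4 * ((s : ℂ) - (r : ℂ)) * τ) (16 * τ) *
        jtheta ((24 * ((r : ℂ) + (s : ℂ)) + 44) * τ) (96 * τ) /
        (jtheta (1 / 2 + (24 * (r : ℂ) + 22) * τ) (96 * τ) *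
          jtheta (1 / 2 + (24 * (s : ℂ) + 22) * τ) (96 * τ))) =
    2 * (Complex.exp (2 * (π : ℂ) * Complex.I * τ) ^ (6 : ℤ) *
          jtheta (4 * τ) (16 * τ) * jtheta (68 * τ) (96 * τ) /
          (jtheta (1 / 2 + 46 * τ) (96 * τ) * jtheta (1 / 2 + 22 * τ) (96 * τ)) -
        Complex.exp (2 * (π : ℂ) * Complex.I * τ) ^ (-47 : ℤ) *
          jtheta (12 * τ) (16 * τ) * jtheta (20 * τ) (96 * τ) /
          (jtheta (1 / 2 + 94 * τ) (96 * τ) * jtheta (1 / 2 + 22 * τ) (96 * τ)) +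
        Complex.exp (2 * (π : ℂ) * Complex.I * τ) ^ (-39 : ℤ) *
          jtheta (4 * τ) (16 * τ) * jtheta (20 * τ) (96 * τ) /
          (jtheta (1 / 2 + 46 * τ) (96 * τ) * jtheta (1 / 2 + 70 * τ) (96 * τ)) -
        Complex.exp (2 * (π : ℂ) * Complex.I * τ) ^ (-52 : ℤ) *
          jtheta (4 * τ) (16 * τ) * jtheta (68 * τ) (96 * τ) /
          (jtheta (1 / 2 + 94 * τ) (96 * τ) * jtheta (1 / 2 + 70 * τ) (96 * τ))) := by
  have h116 : jtheta (116 * τ) (96 * τ) =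
      -(cexp (2 * π * I * τ) ^ 68)⁻¹ * jtheta (20 * τ) (96 * τ) := by
    convert jtheta_mul_add_left τ 20 48 using 3 <;> norm_num
  have h164 : jtheta (164 * τ) (96 * τ) =
      -(cexp (2 * π * I * τ) ^ 116)⁻¹ * jtheta (68 * τ) (96 * τ) := by
    convert jtheta_mul_add_left τ 68 48 using 3 <;> norm_num
  simp only [Finset.sum_range_succ, Finset.sum_range_zero, zero_add]
  norm_num [Qrs, jtheta_zero_left, jtheta_neg_left, h116, h164]
  field_simp
  ring

/-- The simplification of the theta quotient sum `S̄(τ)` (Proposition `bestrepofT`). -/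
theorem sbar_identity (τ : ℂ) (hτ : 0 < τ.im) :
    (∑ r ∈ Finset.range 4, ∑ s ∈ Finset.range 4,
      (-1 : ℂ) ^ r * Complex.exp (2 * (π : ℂ) * Complex.I * τ) ^ (Qrs r s) *
        jtheta (4 * ((s : ℂ) - (r : ℂ)) * τ) (16 * τ) *
        jtheta ((24 * ((r : ℂ) + (s : ℂ)) + 44) * τ) (96 * τ) /
        (jtheta (1 / 2 + (24 * (r : ℂ) + 22) * τ) (96 * τ) *
          jtheta (1 / 2 + (24 * (s : ℂ) + 22) * τ) (96 * τ))) =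
    2 * (Complex.exp (2 * (π : ℂ) * Complex.I * τ) ^ (6 : ℤ) *
          jtheta (4 * τ) (16 * τ) * jtheta (68 * τ) (96 * τ) /
          (jtheta (1 / 2 + 46 * τ) (96 * τ) * jtheta (1 / 2 + 22 * τ) (96 * τ)) -
        Complex.exp (2 * (π : ℂ) * Complex.I * τ) ^ (-47 : ℤ) *
          jtheta (12 * τ) (16 * τ) * jtheta (20 * τ) (96 * τ) /
          (jtheta (1 / 2 + 94 * τ) (96 * τ) * jtheta (1 / 2 + 22 * τ) (96 * τ)) +
        Complex.exp (2 * (π : ℂ) * Complex.I * τ) ^ (-39 : ℤ) *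
          jtheta (4 * τ) (16 * τ) * jtheta (20 * τ) (96 * τ) /
          (jtheta (1 / 2 + 46 * τ) (96 * τ) * jtheta (1 / 2 + 70 * τ) (96 * τ)) -
        Complex.exp (2 * (π : ℂ) * Complex.I * τ) ^ (-52 : ℤ) *
          jtheta (4 * τ) (16 * τ) * jtheta (68 * τ) (96 * τ) /
          (jtheta (1 / 2 + 94 * τ) (96 * τ) * jtheta (1 / 2 + 70 * τ) (96 * τ))) :=
  sbar_identity_general τ
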